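/- Let Γ be a loopless connected finite directed multigraph with chain structure 𝐧, let w₀ be an admissible multidegree on (Γ, 𝐧), and let w ∈ V(G(w₀)). (a) If P(w, v₁, …, v_m) is a minimal path in G(w₀) from w to some w', then m and the vertices v₁, …, v_m are uniquely determined by w and w' up to reordering. (b) Two paths P(w, v₁, …, v_m) and P(w, v'₁, …, v'_{m'}) have the same endpoint if and only if there is an integer k such that for every vertex u of Γ, the multiplicity of u among v'₁, …, v'_{m'} minus the multiplicity of u among v₁, …, v_m equals k. -/

import Mathlib

/-!
Twisting at `v` moves the chip on each edge at `v` one step along its chain. Hence a sequence of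
twists in which every vertex `u` occurs `c u` times lands, in whatever order, at `twistBy w c`:
`μ(e)` moves by `c (tail e) - c (head e)`, and the endpoints of `e` gain or lose one unit each
time an integer lift of `μ(e)` crosses a multiple of `𝐧(e)`. This endpoint depends only on the
differences of `c` along edges, which is one direction of (b). Conversely, if `c` and `c'` reach
the same endpoint, let `A` be the set where `c' - c` is maximal: every edge between `A` and its
complement strictly lowers the total degree on `A`, so by connectedness `A` is everything.
Minimal paths have equal lengths, so the constant in (b) is then `0`, which gives (a).
-/

open scoped Classical

namespace LLS

variable {V E : Type*}

/-- `σ(e,v)`: `1` if `v` is the tail of `e`, `-1` if `v` is the head of `e`, `0` otherwise. -/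
noncomputable def sigma (tail head : E → V) (e : E) (v : V) : ℤ :=
  if tail e = v then 1 else if head e = v then -1 else 0

/-- The endpoint of `e` other than `v` (for `e` adjacent to `v`). -/
noncomputable def otherEnd (tail head : E → V) (e : E) (v : V) : V :=
  if tail e = v then head e else tail e

/-- The multigraph is loopless. -/
def Loopless (tail head : E → V) : Prop := ∀ e, tail e ≠ head e

/-- The multigraph is connected. -/
def MGConnected (tail head : E → V) : Prop :=
  ∀ u v : V, Relation.ReflTransGen
    (fun a b => ∃ e, (tail e = a ∧ head e = b) ∨ (tail e = b ∧ head e = a)) u v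

/-- An admissible multidegree on `(Γ, 𝐧)`: a function `V(Γ) → ℤ` together with an
element `μ(e) ∈ ℤ/𝐧(e)ℤ` for each edge `e`. -/
structure AdmMD (V E : Type*) (n : E → ℕ) where
  wV : V → ℤ
  mu : ∀ e : E, ZMod (n e)

section FinGraph

variable [Fintype V] [Fintype E] [DecidableEq V] [DecidableEq E]

/-- The twist of an admissible multidegree at a vertex `v`. -/
noncomputable def twist (tail head : E → V) (n : E → ℕ) (w : AdmMD V E n) (v : V) :
    AdmMD V E n where
  wV u := w.wV u
    - (if u = v then ((Finset.univ.filter fun e : E =>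
        sigma tail head e v ≠ 0 ∧ w.mu e = 0).card : ℤ) else 0)
    + ((Finset.univ.filter fun e : E => sigma tail head e v ≠ 0 ∧
        w.mu e + (sigma tail head e v : ZMod (n e)) = 0 ∧
        otherEnd tail head e v = u).card : ℤ)
  mu e := w.mu e + (sigma tail head e v : ZMod (n e))

/-- The negative twist of an admissible multidegree at a vertex `v`
(the inverse of `twist`). -/
noncomputable def negTwist (tail head : E → V) (n : E → ℕ) (w : AdmMD V E n) (v : V) :
    AdmMD V E n where
  wV u := w.wV u
    + (if u = v then ((Finset.univ.filter fun e : E => sigma tail head e v ≠ 0 ∧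
        w.mu e - (sigma tail head e v : ZMod (n e)) = 0).card : ℤ) else 0)
    - ((Finset.univ.filter fun e : E => sigma tail head e v ≠ 0 ∧
        w.mu e = 0 ∧ otherEnd tail head e v = u).card : ℤ)
  mu e := w.mu e - (sigma tail head e v : ZMod (n e))

/-- An admissible multidegree is concentrated at `v` if there is an ordering of all
vertices starting with `v` such that composing the negative twists at all previous
vertices makes the multidegree negative at each subsequent vertex. -/
def Concentrated (tail head : E → V) (n : E → ℕ) (w : AdmMD V E n) (v : V) : Prop :=
  ∃ l : List V, l.Nodup ∧ (∀ x : V, x ∈ l) ∧ l.head? = some v ∧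
    ∀ (i : ℕ) (h : i < l.length), 0 < i →
      (((l.take i).foldl (negTwist tail head n) w).wV (l.get ⟨i, h⟩)) < 0

/-- `w` is obtained from `w₀` by a finite sequence of twists, i.e. `w ∈ V(G(w₀))`. -/
def TwistSeq (tail head : E → V) (n : E → ℕ) (w₀ w : AdmMD V E n) : Prop :=
  ∃ l : List V, l.foldl (twist tail head n) w₀ = w

/-- `l` records the successive twist vertices of a minimal path from `w` to `w'`
in `G(w₀)`. -/
def IsMinPath (tail head : E → V) (n : E → ℕ) (w w' : AdmMD V E n) (l : List V) : Prop :=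
  l.foldl (twist tail head n) w = w' ∧
    ∀ l' : List V, l'.foldl (twist tail head n) w = w' → l.length ≤ l'.length

/-- The membership condition describing the subgraph `Ḡ(w₀)` of `G(w₀)`:
no minimal path from `w` to `w_v` involves twisting at `v`. -/
def InBarG (tail head : E → V) (n : E → ℕ) (w₀ : AdmMD V E n) (wv : V → AdmMD V E n)
    (w : AdmMD V E n) : Prop :=
  TwistSeq tail head n w₀ w ∧
    ∀ (v : V) (l : List V), IsMinPath tail head n w (wv v) l → v ∉ l

/-- Edges joining `v` and `u`. -/
noncomputable def edgesBetween (tail head : E → V) (v u : V) : Finset E :=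
  Finset.univ.filter fun e => (tail e = v ∧ head e = u) ∨ (head e = v ∧ tail e = u)

/-- Edges adjacent to `v`. -/
noncomputable def edgesAdj (tail head : E → V) (v : V) : Finset E :=
  Finset.univ.filter fun e => tail e = v ∨ head e = v

/-- The change of a divisor effected by a single chip-firing move at `v`. -/
noncomputable def fireDelta (tail head : E → V) (v : V) : V → ℤ := fun u =>
  ((edgesBetween tail head v u).card : ℤ)
    - (if u = v then ((edgesAdj tail head v).card : ℤ) else 0)

/-- A chip-firing move (twist) at `v`. -/
noncomputable def chipFire (tail head : E → V) (D : V → ℤ) (v : V) : V → ℤ :=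
  fun u => D u + fireDelta tail head v u

/-- The inverse of a chip-firing move at `v`. -/
noncomputable def negChipFire (tail head : E → V) (D : V → ℤ) (v : V) : V → ℤ :=
  fun u => D u - fireDelta tail head v u

/-- A divisor (multidegree) on a graph is concentrated at `v`. -/
def ConcentratedDiv (tail head : E → V) (D : V → ℤ) (v : V) : Prop :=
  ∃ l : List V, l.Nodup ∧ (∀ x : V, x ∈ l) ∧ l.head? = some v ∧
    ∀ (i : ℕ) (h : i < l.length), 0 < i →
      (((l.take i).foldl (negChipFire tail head) D) (l.get ⟨i, h⟩)) < 0

/-- A divisor on a graph is `v₀`-reduced. -/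
def VReduced (tail head : E → V) (D : V → ℤ) (v₀ : V) : Prop :=
  (∀ u, u ≠ v₀ → 0 ≤ D u) ∧
    ∀ S : Finset V, S.Nonempty → v₀ ∉ S →
      ∃ v ∈ S, D v < ((Finset.univ.filter fun e : E =>
        (tail e = v ∧ head e ∉ S) ∨ (head e = v ∧ tail e ∉ S)).card : ℤ)

/-- The function `D_{w,v}` on edges of `Γ` determined by a path `l` from `w` to `w_v`. -/
noncomputable def DFun (tail head : E → V) (n : E → ℕ) (w : AdmMD V E n) (l : List V)
    (v : V) (et : E) : ℤ :=
  (((Finset.univ : Finset (Fin l.length)).filter fun j =>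
      l.get j = otherEnd tail head et v ∧
        ((l.take (j.val + 1)).foldl (twist tail head n) w).mu et = 0).card : ℤ)
  - (((Finset.univ : Finset (Fin l.length)).filter fun j =>
      l.get j = v ∧ ((l.take j.val).foldl (twist tail head n) w).mu et = 0).card : ℤ)

end FinGraph

/-- The tail map of the subdivided graph `Γ̃`: the edge `e` of `Γ` is subdivided into
`𝐧(e)` edges `(e, j)`, `j = 0, …, 𝐧(e) - 1`, numbered from the tail of `e`; the new
vertices over `e` are `(e, i)`, `i = 0, …, 𝐧(e) - 2`, with `(e, i)` being the
`(i+1)`-st new vertex from the tail of `e`. -/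
def tailT (tail head : E → V) (n : E → ℕ) :
    (Σ e : E, Fin (n e)) → V ⊕ Σ e : E, Fin (n e - 1) := fun p =>
  if h : p.2.val = 0 then Sum.inl (tail p.1)
  else Sum.inr ⟨p.1, ⟨p.2.val - 1, by have := p.2.isLt; omega⟩⟩

/-- The head map of the subdivided graph `Γ̃`. -/
def headT (tail head : E → V) (n : E → ℕ) :
    (Σ e : E, Fin (n e)) → V ⊕ Σ e : E, Fin (n e - 1) := fun p =>
  if h : p.2.val = n p.1 - 1 then Sum.inl (head p.1)
  else Sum.inr ⟨p.1, ⟨p.2.val, by have := p.2.isLt; omega⟩⟩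

/-- The multidegree on the subdivided graph `Γ̃` induced by an admissible multidegree:
it agrees with `w` on old vertices, is `1` on the `μ(e)`-th new vertex over `e`
when `μ(e) ≠ 0`, and is `0` on all other new vertices. -/
noncomputable def inducedMD (n : E → ℕ) (w : AdmMD V E n) :
    (V ⊕ Σ e : E, Fin (n e - 1)) → ℤ
  | Sum.inl v => w.wV v
  | Sum.inr ⟨e, i⟩ => if (w.mu e).val = i.val + 1 then 1 else 0

/-- The simple graph `Γ̄` associated to the multigraph `Γ`: same vertices, one edge
between each pair of adjacent vertices. -/
def barGraph (tail head : E → V) : SimpleGraph V where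
  Adj u v := u ≠ v ∧ ∃ e, (tail e = u ∧ head e = v) ∨ (tail e = v ∧ head e = u)
  symm := by
    constructor
    intro u v h
    exact ⟨h.1.symm, h.2.imp fun e he => he.symm⟩
  loopless := by
    constructor
    exact fun u h => h.1 rfl

end LLS

theorem Int.add_one_ediv_sub_ediv {N : ℤ} (hN : 0 < N) (x : ℤ) :
    (x + 1) / N - x / N = if N ∣ x + 1 then 1 else 0 := by
  have h := Int.mul_ediv_add_emod x N
  have h' := Int.mul_ediv_add_emod (x + 1) N
  have := Int.emod_nonneg x hN.ne'
  have := Int.emod_lt_of_pos x hN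
  have := Int.emod_nonneg (x + 1) hN.ne'
  have := Int.emod_lt_of_pos (x + 1) hN
  simp only [Int.dvd_iff_emod_eq_zero]
  obtain ⟨d, hd⟩ : ∃ d, (x + 1) / N - x / N = d := ⟨_, rfl⟩
  have hNd : N * d = 1 + x % N - (x + 1) % N := by rw [← hd]; linarith
  rw [hd]
  split_ifs with h0
  · nlinarith
  · have : 0 < (x + 1) % N := lt_of_le_of_ne (by assumption) (Ne.symm h0)
    rcases lt_trichotomy d 0 with hneg | rfl | hpos
    · nlinarith
    · rfl
    · nlinarith

theorem Int.ediv_lt_ediv_of_lt_of_dvd_sub {N a b : ℤ} (hN : 0 < N) (hab : a < b)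
    (hd : N ∣ b - a) : a / N < b / N := by
  obtain ⟨k, hk⟩ := hd
  have hk1 : 1 ≤ k := by nlinarith
  rw [show b = a + k * N by linarith, Int.add_mul_ediv_right _ _ hN.ne']
  omega

theorem Relation.ReflTransGen.exists_boundary {α : Type*} {r : α → α → Prop}
    {P : α → Prop} {a b : α} (h : Relation.ReflTransGen r a b) (ha : P a) (hb : ¬P b) :
    ∃ x y, r x y ∧ P x ∧ ¬P y := by
  induction h with
  | refl => exact absurd ha hb
  | @tail x y _ hxy ih => exact if hx : P x then ⟨x, y, hxy, hx, hb⟩ else ih hx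

theorem List.perm_of_length_eq_of_count_sub_eq {α : Type*} [Fintype α] [DecidableEq α]
    {l l' : List α} {k : ℤ} (hlen : l.length = l'.length)
    (hk : ∀ a, (l'.count a : ℤ) - l.count a = k) : l.Perm l' := by
  rw [List.perm_iff_count]
  intro a
  have hsum : ∑ x, ((l'.count x : ℤ) - l.count x) = 0 := by
    have hl := Multiset.sum_count_eq_card (s := Finset.univ) (m := (l : Multiset α)) (by simp)
    have hl' := Multiset.sum_count_eq_card (s := Finset.univ) (m := (l' : Multiset α)) (by simp)
    simp only [Multiset.coe_count, Multiset.coe_card] at hl hl'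
    rw [Finset.sum_sub_distrib, ← Nat.cast_sum, ← Nat.cast_sum, hl, hl', hlen, sub_self]
  rw [Finset.sum_congr rfl fun x _ => hk x, Finset.sum_const, Finset.card_univ, nsmul_eq_mul,
    mul_eq_zero] at hsum
  have hk0 : k = 0 := hsum.resolve_left (by have := Fintype.card_pos_iff.2 ⟨a⟩; omega)
  have := hk a
  omega

namespace LLS

variable {V E : Type*}

theorem MGConnected.exists_edge_not_iff {tail head : E → V} (hconn : MGConnected tail head)
    {P : V → Prop} {a b : V} (ha : P a) (hb : ¬P b) : ∃ e, ¬(P (tail e) ↔ P (head e)) := by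
  obtain ⟨x, y, ⟨e, he⟩, hx, hy⟩ := (hconn a b).exists_boundary ha hb
  refine ⟨e, ?_⟩
  rcases he with ⟨rfl, rfl⟩ | ⟨rfl, rfl⟩ <;> tauto

section TwistBy

variable (tail head : E → V) {n : E → ℕ}

def liftedPos (w : AdmMD V E n) (c : V → ℤ) (e : E) : ℤ :=
  (w.mu e).val + (c (tail e) - c (head e))

variable [DecidableEq V]

/- `x / n e - y / n e` counts the multiples of `n e` in `(y, x]`: the head gains a unit each time
the lifted position reaches a multiple of `n e`, and the tail loses one each time it leaves one. -/
def edgeGain (w : AdmMD V E n) (c : V → ℤ) (e : E) (u : V) : ℤ :=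
  (if head e = u then liftedPos tail head w c e / n e - (w.mu e).val / n e else 0) +
    (if tail e = u then ((w.mu e).val - 1) / n e - (liftedPos tail head w c e - 1) / n e else 0)

variable {tail head}

theorem add_single_tail_sub_head (hloop : Loopless tail head) (c : V → ℤ) (v : V) (e : E) :
    (c + Pi.single v 1 : V → ℤ) (tail e) - (c + Pi.single v 1 : V → ℤ) (head e) =
      c (tail e) - c (head e) + sigma tail head e v := by
  unfold sigma
  by_cases ht : tail e = v
  · subst ht
    simp [(hloop e).symm]
    ring
  · by_cases hh : head e = v
    · subst hh
      simp [ht]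
      ring
    · simp [ht, hh]

theorem liftedPos_add_single (hloop : Loopless tail head) (w : AdmMD V E n) (c : V → ℤ)
    (v : V) (e : E) :
    liftedPos tail head w (c + Pi.single v 1) e =
      liftedPos tail head w c e + sigma tail head e v := by
  rw [liftedPos, liftedPos, add_single_tail_sub_head hloop, add_assoc]

theorem edgeGain_add_single (hloop : Loopless tail head) (hn : ∀ e, 0 < n e)
    (w : AdmMD V E n) (c : V → ℤ) (v u : V) (e : E) :
    edgeGain tail head w (c + Pi.single v 1) e u = edgeGain tail head w c e u
      - (if u = v ∧ sigma tail head e v ≠ 0 ∧ (n e : ℤ) ∣ liftedPos tail head w c e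
          then 1 else 0)
      + (if sigma tail head e v ≠ 0 ∧
          (n e : ℤ) ∣ liftedPos tail head w c e + sigma tail head e v ∧
          otherEnd tail head e v = u then 1 else 0) := by
  have hN : (0 : ℤ) < n e := by exact_mod_cast hn e
  have step := Int.add_one_ediv_sub_ediv hN
  rw [edgeGain, edgeGain, liftedPos_add_single hloop]
  set p := liftedPos tail head w c e
  have h0 := step (p - 2)
  have h1 := step (p - 1)
  have h2 := step p
  simp only [sub_add_cancel, show p - 2 + 1 = p - 1 by ring] at h0 h1 h2
  by_cases htv : tail e = v
  · subst htv
    by_cases hu : head e = u <;> by_cases hu' : tail e = u <;>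
      simp [sigma, otherEnd, hu, hu', eq_comm (a := u)] <;> linarith
  · by_cases hhv : head e = v
    · subst hhv
      by_cases hu : head e = u <;> by_cases hu' : tail e = u <;>
        simp [sigma, otherEnd, htv, hu, hu', eq_comm (a := u),
          ← sub_eq_add_neg, sub_sub, one_add_one_eq_two] <;> linarith
    · simp [sigma, htv, hhv]

theorem sum_edgeGain (w : AdmMD V E n) (c : V → ℤ) (e : E) (A : Finset V) :
    ∑ u ∈ A, edgeGain tail head w c e u =
      (if head e ∈ A then liftedPos tail head w c e / n e - (w.mu e).val / n e else 0) +
        (if tail e ∈ A then ((w.mu e).val - 1) / n e - (liftedPos tail head w c e - 1) / n e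
          else 0) := by
  simp only [edgeGain, Finset.sum_add_distrib, Finset.sum_ite_eq]

theorem sum_edgeGain_sub_le (hn : ∀ e, 0 < n e) (w : AdmMD V E n) {c c' : V → ℤ} {e : E}
    (hdvd : (n e : ℤ) ∣ liftedPos tail head w c' e - liftedPos tail head w c e)
    {A : Finset V} {M : ℤ} (hM : ∀ x, c' x - c x ≤ M)
    (hA : ∀ x, x ∈ A ↔ c' x - c x = M) :
    ∑ u ∈ A, (edgeGain tail head w c' e u - edgeGain tail head w c e u) ≤
      if (tail e ∈ A ↔ head e ∈ A) then 0 else -1 := by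
  have hN : (0 : ℤ) < n e := by exact_mod_cast hn e
  have hp : liftedPos tail head w c' e - liftedPos tail head w c e =
      (c' (tail e) - c (tail e)) - (c' (head e) - c (head e)) := by
    simp only [liftedPos]; ring
  have ht := hM (tail e)
  have hh := hM (head e)
  rw [Finset.sum_sub_distrib, sum_edgeGain, sum_edgeGain]
  by_cases htA : tail e ∈ A <;> by_cases hhA : head e ∈ A <;>
    simp only [htA, hhA, if_true, if_false, iff_self, iff_false, false_iff, not_true]
  · rw [(hA _).1 htA, (hA _).1 hhA, sub_self, sub_eq_zero] at hp
    rw [hp]; simp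
  · have := Int.ediv_lt_ediv_of_lt_of_dvd_sub hN (b := liftedPos tail head w c' e - 1)
      (a := liftedPos tail head w c e - 1)
      (by have := (hA _).1 htA; have := (hA _).not.1 hhA; omega)
      (by rw [show ∀ x y : ℤ, x - 1 - (y - 1) = x - y from fun _ _ => by ring]; exact hdvd)
    linarith
  · have := Int.ediv_lt_ediv_of_lt_of_dvd_sub hN (b := liftedPos tail head w c e)
      (a := liftedPos tail head w c' e)
      (by have := (hA _).1 hhA; have := (hA _).not.1 htA; omega)
      (by rw [← neg_sub]; exact hdvd.neg_right)
    linarith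
  · simp

variable [Fintype E]

variable (tail head) in
def twistBy (w : AdmMD V E n) (c : V → ℤ) : AdmMD V E n where
  wV u := w.wV u + ∑ e, edgeGain tail head w c e u
  mu e := w.mu e + ((c (tail e) - c (head e) : ℤ) : ZMod (n e))

variable (tail head) in
theorem twistBy_mu_add_eq_zero_iff (hn : ∀ e, 0 < n e) (w : AdmMD V E n) (c : V → ℤ) (e : E)
    (s : ℤ) : (twistBy tail head w c).mu e + (s : ZMod (n e)) = 0 ↔
      (n e : ℤ) ∣ liftedPos tail head w c e + s := by
  have : NeZero (n e) := ⟨(hn e).ne'⟩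
  rw [← ZMod.intCast_zmod_eq_zero_iff_dvd, liftedPos, twistBy]
  push_cast
  rw [ZMod.natCast_zmod_val]

theorem twistBy_zero (w : AdmMD V E n) : twistBy tail head w 0 = w := by
  simp [twistBy, edgeGain, liftedPos]

theorem twistBy_add_const (w : AdmMD V E n) (c : V → ℤ) (k : ℤ) :
    twistBy tail head w (c + fun _ => k) = twistBy tail head w c := by
  simp [twistBy, edgeGain, liftedPos]

theorem twist_twistBy (hloop : Loopless tail head) (hn : ∀ e, 0 < n e) (w : AdmMD V E n)
    (c : V → ℤ) (v : V) :
    twist tail head n (twistBy tail head w c) v = twistBy tail head w (c + Pi.single v 1) := by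
  have hmu0 e : (twistBy tail head w c).mu e = 0 ↔ (n e : ℤ) ∣ liftedPos tail head w c e := by
    simpa using twistBy_mu_add_eq_zero_iff tail head hn w c e 0
  have hmu := twistBy_mu_add_eq_zero_iff tail head hn w c
  simp only [twist, hmu0, hmu]
  congr 1
  · funext u
    simp only [twistBy, edgeGain_add_single hloop hn, Finset.sum_add_distrib,
      Finset.sum_sub_distrib, Finset.card_filter]
    push_cast
    by_cases huv : u = v <;> simp [huv] <;> ring
  · funext e
    simp only [twistBy, add_single_tail_sub_head hloop, Int.cast_add, add_assoc]

theorem foldl_twist_eq_twistBy (hloop : Loopless tail head) (hn : ∀ e, 0 < n e)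
    (w : AdmMD V E n) (l : List V) :
    l.foldl (twist tail head n) w = twistBy tail head w (fun u => l.count u) := by
  induction l using List.reverseRecOn with
  | nil => exact (twistBy_zero w).symm
  | append_singleton l v ih =>
    rw [List.foldl_append, List.foldl_cons, List.foldl_nil, ih, twist_twistBy hloop hn]
    congr 1
    funext u
    by_cases hu : u = v
    · subst hu
      simp
    · simp [hu, Ne.symm hu]

theorem exists_const_of_twistBy_eq [Fintype V] (hconn : MGConnected tail head)
    (hn : ∀ e, 0 < n e) (w : AdmMD V E n) {c c' : V → ℤ}
    (h : twistBy tail head w c = twistBy tail head w c') :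
    ∃ k : ℤ, ∀ u, c' u - c u = k := by
  have hdvd : ∀ e, (n e : ℤ) ∣ liftedPos tail head w c' e - liftedPos tail head w c e := by
    intro e
    have hmu := add_left_cancel (congrFun (congrArg AdmMD.mu h) e)
    rw [ZMod.intCast_eq_intCast_iff_dvd_sub] at hmu
    convert hmu using 1
    simp only [liftedPos]; ring
  by_contra! hk
  obtain ⟨a, -⟩ := hk 0
  obtain ⟨m, -, hm⟩ :=
    Finset.exists_max_image Finset.univ (fun u => c' u - c u) ⟨a, Finset.mem_univ a⟩
  obtain ⟨b, hb⟩ := hk (c' m - c m)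
  set A := Finset.univ.filter fun u => c' u - c u = c' m - c m
  have hA : ∀ x, x ∈ A ↔ c' x - c x = c' m - c m := by simp [A]
  obtain ⟨e₀, he₀⟩ :=
    hconn.exists_edge_not_iff (P := (· ∈ A)) ((hA m).2 rfl) ((hA b).not.2 hb)
  set D : E → ℤ :=
    fun e => ∑ u ∈ A, (edgeGain tail head w c' e u - edgeGain tail head w c e u)
  have hbound e : D e ≤ if (tail e ∈ A ↔ head e ∈ A) then 0 else -1 :=
    sum_edgeGain_sub_le hn w (hdvd e) (fun x => hm x (Finset.mem_univ x)) hA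
  have hzero : ∑ e, D e = 0 := by
    rw [Finset.sum_comm]
    refine Finset.sum_eq_zero fun u _ => ?_
    have := congrFun (congrArg AdmMD.wV h) u
    simp only [twistBy, add_right_inj] at this
    rw [Finset.sum_sub_distrib, this, sub_self]
  have hle e : D e ≤ 0 := (hbound e).trans (by split_ifs <;> norm_num)
  have hlt : D e₀ < 0 := (hbound e₀).trans_lt (by simp [he₀])
  exact (Finset.sum_lt_sum (fun e _ => hle e) ⟨e₀, Finset.mem_univ _, hlt⟩).ne
    (by rw [hzero, Finset.sum_const_zero])

end TwistBy

theorem foldl_twist_eq_iff [Fintype V] [Fintype E] [DecidableEq V] [DecidableEq E]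
    {tail head : E → V} {n : E → ℕ} (hloop : Loopless tail head)
    (hconn : MGConnected tail head) (hn : ∀ e, 0 < n e) (w : AdmMD V E n) (l l' : List V) :
    l.foldl (twist tail head n) w = l'.foldl (twist tail head n) w ↔
      ∃ k : ℤ, ∀ u : V, (l'.count u : ℤ) - (l.count u : ℤ) = k := by
  rw [foldl_twist_eq_twistBy hloop hn, foldl_twist_eq_twistBy hloop hn]
  refine ⟨exists_const_of_twistBy_eq hconn hn w, fun ⟨k, hk⟩ => ?_⟩
  have : (fun u => (l'.count u : ℤ)) = (fun u => (l.count u : ℤ)) + fun _ => k :=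
    funext fun u => by simp [← hk u]
  rw [this, twistBy_add_const]

theorem statement_0_general {V E : Type*} [Fintype V] [Fintype E] [DecidableEq V] [DecidableEq E]
    (tail head : E → V) (n : E → ℕ)
    (hloop : Loopless tail head) (hconn : MGConnected tail head)
    (hn : ∀ e, 0 < n e)
    (w : AdmMD V E n) :
    (∀ (w' : AdmMD V E n) (l l' : List V),
        IsMinPath tail head n w w' l → IsMinPath tail head n w w' l' → l.Perm l') ∧
    (∀ l l' : List V,
        l.foldl (twist tail head n) w = l'.foldl (twist tail head n) w ↔
          ∃ k : ℤ, ∀ u : V, (l'.count u : ℤ) - (l.count u : ℤ) = k) := by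
  refine ⟨fun w' l l' hl hl' => ?_, foldl_twist_eq_iff hloop hconn hn w⟩
  obtain ⟨k, hk⟩ := (foldl_twist_eq_iff hloop hconn hn w l l').1 (hl.1.trans hl'.1.symm)
  exact List.perm_of_length_eq_of_count_sub_eq (le_antisymm (hl.2 l' hl'.1) (hl'.2 l hl.1)) hk

/-- minimal paths in `G(w₀)` are unique up to reordering, and two paths
from `w` have the same endpoint iff their vertex multiplicities differ by a constant. -/
theorem statement_0 {V E : Type*} [Fintype V] [Fintype E] [DecidableEq V] [DecidableEq E]
    (tail head : E → V) (n : E → ℕ)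
    (hloop : Loopless tail head) (hconn : MGConnected tail head)
    (hn : ∀ e, 0 < n e)
    (w₀ w : AdmMD V E n) (hw : TwistSeq tail head n w₀ w) :
    (∀ (w' : AdmMD V E n) (l l' : List V),
        IsMinPath tail head n w w' l → IsMinPath tail head n w w' l' → l.Perm l') ∧
    (∀ l l' : List V,
        l.foldl (twist tail head n) w = l'.foldl (twist tail head n) w ↔
          ∃ k : ℤ, ∀ u : V, (l'.count u : ℤ) - (l.count u : ℤ) = k) :=
  statement_0_general tail head n hloop hconn hn w

end LLS
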